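/- Ratio consensus for the generation algorithm: if G is connected and z0, w0 : Fin n → ℝ satisfy ∑ j, w0 j ≠ 0, then for every vertex i the limits z∞ i = lim_{t→∞} (M^t z0) i and w∞ i = lim_{t→∞} (M^t w0) i exist with w∞ i ≠ 0, and z∞ i / w∞ i = (∑ j, z0 j) / (∑ j, w0 j); in particular this ratio is the same for all vertices i. -/

import Mathlib

/-!
The generation matrix `M` is column stochastic, so each entry of `u ᵥ* M` is a convex
combination of the entries of `u`: along a row of `M ^ t` the maximum can only decrease and the
minimum only increase. Since `G` is connected and `M` has a positive diagonal, `M ^ n` is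
entrywise at least some `ε > 0`, which shrinks the spread `max - min` of a row by the factor
`1 - n ε` every `n` steps. Hence row `i` of `M ^ t` tends to a constant row `p > 0`, so
`(M ^ t *ᵥ v) i → p * ∑ j, v j`, and the ratio of the two limits is the ratio of the sums.
-/

open Filter Topology Finset

lemma exists_tendsto_of_antitone_of_monotone_of_gap_contracts {S I : ℕ → ℝ}
    (hS : Antitone S) (hI : Monotone I) (hIS : ∀ t, I t ≤ S t) {N : ℕ} {c : ℝ} (hc : c < 1)
    (hgap : ∀ t, S (t + N) - I (t + N) ≤ c * (S t - I t)) :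
    ∃ L, Tendsto S atTop (𝓝 L) ∧ Tendsto I atTop (𝓝 L) := by
  have hS_lim : Tendsto S atTop (𝓝 (⨅ t, S t)) :=
    tendsto_atTop_ciInf hS ⟨I 0, by rintro _ ⟨t, rfl⟩; exact (hI t.zero_le).trans (hIS t)⟩
  have hI_lim : Tendsto I atTop (𝓝 (⨆ t, I t)) :=
    tendsto_atTop_ciSup hI ⟨S 0, by rintro _ ⟨t, rfl⟩; exact (hIS t).trans (hS t.zero_le)⟩
  set g := (⨅ t, S t) - ⨆ t, I t
  have hgap_lim : Tendsto (fun t => S t - I t) atTop (𝓝 g) := hS_lim.sub hI_lim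
  -- The limit `g` of the gaps satisfies `0 ≤ g ≤ c * g`, which forces `g = 0`.
  have hg_nonneg : 0 ≤ g := ge_of_tendsto' hgap_lim fun t => sub_nonneg.2 (hIS t)
  have hg_le : g ≤ c * g :=
    le_of_tendsto_of_tendsto' ((tendsto_add_atTop_iff_nat N).2 hgap_lim)
      (hgap_lim.const_mul c) hgap
  refine ⟨⨅ t, S t, hS_lim, ?_⟩
  convert hI_lim using 2
  nlinarith

namespace Matrix

variable {ι : Type*} [Fintype ι]

lemma tendsto_mulVec_apply_of_tendsto_apply {A : ℕ → Matrix ι ι ℝ} {i : ι} {p : ℝ}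
    (h : ∀ j, Tendsto (fun t => A t i j) atTop (𝓝 p)) (v : ι → ℝ) :
    Tendsto (fun t => (A t *ᵥ v) i) atTop (𝓝 (p * ∑ j, v j)) := by
  rw [mul_sum]
  exact tendsto_finsetSum _ fun j _ => (h j).mul_const (v j)

variable [DecidableEq ι]

section ColStochastic

variable {B : Matrix ι ι ℝ} {u : ι → ℝ}

lemma vecMul_apply_le_of_mem_colStochastic (hB : B ∈ colStochastic ℝ ι) {b : ℝ}
    (hu : ∀ k, u k ≤ b) (j : ι) : (u ᵥ* B) j ≤ b :=
  calc (u ᵥ* B) j = ∑ k, u k * B k j := rfl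
    _ ≤ ∑ k, b * B k j := sum_le_sum fun k _ => mul_le_mul_of_nonneg_right (hu k) (hB.1 k j)
    _ = b := by rw [← mul_sum, sum_col_of_mem_colStochastic hB, mul_one]

lemma le_vecMul_apply_of_mem_colStochastic (hB : B ∈ colStochastic ℝ ι) {a : ℝ}
    (hu : ∀ k, a ≤ u k) (j : ι) : a ≤ (u ᵥ* B) j :=
  calc a = ∑ k, a * B k j := by rw [← mul_sum, sum_col_of_mem_colStochastic hB, mul_one]
    _ ≤ ∑ k, u k * B k j := sum_le_sum fun k _ => mul_le_mul_of_nonneg_right (hu k) (hB.1 k j)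

lemma vecMul_apply_sub_le_of_mem_colStochastic (hB : B ∈ colStochastic ℝ ι) {ε a b : ℝ}
    (hε : ∀ k j, ε ≤ B k j) (ha : ∀ k, a ≤ u k) (hb : ∀ k, u k ≤ b) (j l : ι) :
    (u ᵥ* B) j - (u ᵥ* B) l ≤ (1 - Fintype.card ι * ε) * (b - a) := by
  -- Split off the uniform part `ε` of every column: it contributes `ε * ∑ u` to every entry.
  have hsplit : ∀ j, (u ᵥ* B) j = ∑ k, u k * (B k j - ε) + ε * ∑ k, u k := fun j => by
    simp only [vecMul, dotProduct, mul_sum, ← sum_add_distrib]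
    exact sum_congr rfl fun k _ => by ring
  have hrest : ∀ j, ∑ k, (B k j - ε) = 1 - Fintype.card ι * ε := fun j => by
    rw [sum_sub_distrib, sum_col_of_mem_colStochastic hB, sum_const, card_univ, nsmul_eq_mul]
  have hupper : ∑ k, u k * (B k j - ε) ≤ b * (1 - Fintype.card ι * ε) := by
    rw [← hrest j, mul_sum]
    exact sum_le_sum fun k _ => mul_le_mul_of_nonneg_right (hb k) (sub_nonneg.2 (hε k j))
  have hlower : a * (1 - Fintype.card ι * ε) ≤ ∑ k, u k * (B k l - ε) := by
    rw [← hrest l, mul_sum]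
    exact sum_le_sum fun k _ => mul_le_mul_of_nonneg_right (ha k) (sub_nonneg.2 (hε k l))
  rw [hsplit j, hsplit l]
  linarith

end ColStochastic

variable {A : Matrix ι ι ℝ}

theorem IsPrimitive.exists_tendsto_pow_apply (hA : A ∈ colStochastic ℝ ι)
    (hprim : A.IsPrimitive) [Nonempty ι] (i : ι) :
    ∃ p > 0, ∀ j, Tendsto (fun t => (A ^ t) i j) atTop (𝓝 p) := by
  obtain ⟨-, N, -, hpos⟩ := hprim
  obtain ⟨⟨k₀, j₀⟩, hmin⟩ := Finite.exists_min fun kj : ι × ι => (A ^ N) kj.1 kj.2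
  set ε := (A ^ N) k₀ j₀
  have hε : ∀ k j, ε ≤ (A ^ N) k j := fun k j => hmin (k, j)
  have hrow : ∀ t s, (A ^ (t + s)) i = (A ^ t) i ᵥ* A ^ s := fun t s => by
    rw [pow_add, mul_apply_eq_vecMul]
  have hpow : ∀ s, A ^ s ∈ colStochastic ℝ ι := fun s => pow_mem hA s
  set S : ℕ → ℝ := fun t => univ.sup' univ_nonempty ((A ^ t) i)
  set I : ℕ → ℝ := fun t => univ.inf' univ_nonempty ((A ^ t) i)
  have hS : ∀ t j, (A ^ t) i j ≤ S t := fun t j => le_sup' _ (mem_univ j)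
  have hI : ∀ t j, I t ≤ (A ^ t) i j := fun t j => inf'_le _ (mem_univ j)
  have hS_anti : Antitone S := antitone_nat_of_succ_le fun t => sup'_le _ _ fun j _ => by
    rw [hrow]
    exact vecMul_apply_le_of_mem_colStochastic (hpow 1) (hS t) j
  have hI_mono : Monotone I := monotone_nat_of_le_succ fun t => le_inf' _ _ fun j _ => by
    rw [hrow]
    exact le_vecMul_apply_of_mem_colStochastic (hpow 1) (hI t) j
  have hgap : ∀ t, S (t + N) - I (t + N) ≤ (1 - Fintype.card ι * ε) * (S t - I t) := by
    intro t
    obtain ⟨j, -, hj⟩ := exists_mem_eq_sup' univ_nonempty ((A ^ (t + N)) i)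
    obtain ⟨l, -, hl⟩ := exists_mem_eq_inf' univ_nonempty ((A ^ (t + N)) i)
    simp only [S, I, hj, hl, hrow]
    exact vecMul_apply_sub_le_of_mem_colStochastic (hpow N) hε (hI t) (hS t) j l
  have hc : 1 - Fintype.card ι * ε < 1 := by
    have : (0 : ℝ) < Fintype.card ι := by exact_mod_cast Fintype.card_pos
    nlinarith [hpos k₀ j₀]
  obtain ⟨p, hS_lim, hI_lim⟩ := exists_tendsto_of_antitone_of_monotone_of_gap_contracts
    hS_anti hI_mono (fun t => (hI t i).trans (hS t i)) hc hgap
  refine ⟨p, (hpos k₀ j₀).trans_le ?_, fun j => ?_⟩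
  · exact (le_inf' _ _ fun j _ => hε i j).trans (hI_mono.ge_of_tendsto hI_lim N)
  · exact tendsto_of_tendsto_of_tendsto_of_le_of_le hI_lim hS_lim (hI · j) (hS · j)

section Graph

variable {G : SimpleGraph ι}

lemma pow_apply_pos_of_walk (hA : ∀ i j, 0 ≤ A i j) (hdiag : ∀ i, 0 < A i i)
    (hadj : ∀ i j, G.Adj i j → 0 < A i j) {t : ℕ} {i j : ι} (w : G.Walk i j)
    (hw : w.length ≤ t) : 0 < (A ^ t) i j := by
  induction t generalizing i with
  | zero =>
    obtain rfl := w.eq_of_length_eq_zero (Nat.le_zero.1 hw)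
    simp
  | succ t ih =>
    rw [pow_succ', mul_apply]
    refine sum_pos' (fun k _ => mul_nonneg (hA i k) (pow_apply_nonneg hA t k j)) ?_
    cases w with
    | nil => exact ⟨_, mem_univ _, mul_pos (hdiag _) (ih .nil (Nat.zero_le t))⟩
    | cons h w' =>
      rw [SimpleGraph.Walk.length_cons] at hw
      exact ⟨_, mem_univ _, mul_pos (hadj _ _ h) (ih w' (by omega))⟩

lemma isPrimitive_of_connected [Nonempty ι] (hG : G.Connected) (hA : ∀ i j, 0 ≤ A i j)
    (hdiag : ∀ i, 0 < A i i) (hadj : ∀ i j, G.Adj i j → 0 < A i j) : A.IsPrimitive :=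
  ⟨hA, Fintype.card ι, Fintype.card_pos, fun i j =>
    let p := (hG i j).some.toPath
    pow_apply_pos_of_walk hA hdiag hadj p.1 p.2.length_lt.le⟩

end Graph

end Matrix

namespace SimpleGraph

variable {V : Type*} [Fintype V] [DecidableEq V] (G : SimpleGraph V) [DecidableRel G.Adj]

noncomputable def generationMatrix : Matrix V V ℝ :=
  Matrix.of fun i j => if i = j ∨ G.Adj i j then 1 / (1 + (G.degree j : ℝ)) else 0

lemma generationMatrix_apply_pos {i j : V} (h : i = j ∨ G.Adj i j) :
    0 < G.generationMatrix i j := by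
  simp only [generationMatrix, Matrix.of_apply, if_pos h]
  positivity

lemma generationMatrix_mem_colStochastic : G.generationMatrix ∈ Matrix.colStochastic ℝ V := by
  refine Matrix.mem_colStochastic_iff_sum.2 ⟨fun i j => ?_, fun j => ?_⟩
  · by_cases h : i = j ∨ G.Adj i j
    · exact (G.generationMatrix_apply_pos h).le
    · simp [generationMatrix, h]
  · have hcol : univ.filter (fun i => i = j ∨ G.Adj i j) = insert j (G.neighborFinset j) := by
      ext i
      simp [G.adj_comm]
    simp only [generationMatrix, Matrix.of_apply, sum_ite, sum_const_zero, add_zero, sum_const,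
      hcol, card_insert_of_notMem (G.notMem_neighborFinset_self j), card_neighborFinset_eq_degree]
    rw [nsmul_eq_mul, Nat.cast_add_one, add_comm, mul_one_div_cancel (by positivity)]

lemma generationMatrix_isPrimitive [Nonempty V] (hG : G.Connected) :
    G.generationMatrix.IsPrimitive :=
  Matrix.isPrimitive_of_connected hG G.generationMatrix_mem_colStochastic.1
    (fun _ => G.generationMatrix_apply_pos (.inl rfl))
    (fun _ _ h => G.generationMatrix_apply_pos (.inr h))

end SimpleGraph

theorem stmt5_general (n : ℕ) (G : SimpleGraph (Fin n)) [DecidableRel G.Adj]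
    (M : Matrix (Fin n) (Fin n) ℝ)
    (hM : ∀ i j, M i j =
      if i = j ∨ G.Adj i j then 1 / (1 + (G.degree j : ℝ)) else 0)
    (hG : G.Connected)
    (z0 w0 : Fin n → ℝ) (hw0 : ∑ j, w0 j ≠ 0) :
    ∀ i : Fin n, ∃ zi wi : ℝ,
      Tendsto (fun t => ((M ^ t).mulVec z0) i) atTop (𝓝 zi) ∧
      Tendsto (fun t => ((M ^ t).mulVec w0) i) atTop (𝓝 wi) ∧
      wi ≠ 0 ∧ zi / wi = (∑ j, z0 j) / (∑ j, w0 j) := by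
  intro i
  have : Nonempty (Fin n) := ⟨i⟩
  obtain rfl : M = G.generationMatrix := Matrix.ext hM
  obtain ⟨p, hp, hlim⟩ := (G.generationMatrix_isPrimitive hG).exists_tendsto_pow_apply
    G.generationMatrix_mem_colStochastic i
  exact ⟨p * ∑ j, z0 j, p * ∑ j, w0 j, Matrix.tendsto_mulVec_apply_of_tendsto_apply hlim z0,
    Matrix.tendsto_mulVec_apply_of_tendsto_apply hlim w0, mul_ne_zero hp.ne' hw0,
    mul_div_mul_left _ _ hp.ne'⟩

theorem stmt5 (n : ℕ) (hn : 1 ≤ n) (G : SimpleGraph (Fin n)) [DecidableRel G.Adj]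
    (M : Matrix (Fin n) (Fin n) ℝ)
    (hM : ∀ i j, M i j =
      if i = j ∨ G.Adj i j then 1 / (1 + (G.degree j : ℝ)) else 0)
    (hG : G.Connected)
    (z0 w0 : Fin n → ℝ) (hw0 : ∑ j, w0 j ≠ 0) :
    ∀ i : Fin n, ∃ zi wi : ℝ,
      Tendsto (fun t => ((M ^ t).mulVec z0) i) atTop (𝓝 zi) ∧
      Tendsto (fun t => ((M ^ t).mulVec w0) i) atTop (𝓝 wi) ∧
      wi ≠ 0 ∧ zi / wi = (∑ j, z0 j) / (∑ j, w0 j) :=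
  stmt5_general n G M hM hG z0 w0 hw0
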